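/- arXiv:1501.07721 — 7 statements merged into one kernel-verified Lean document; each statement's English description precedes it below -/
import Mathlib

section
/- Let a, b, n be positive integers with a - b ≥ 2 and 2n > a + b. Then sin(πa/n) + sin(πb/n) < sin(π(a-1)/n) + sin(π(b+1)/n). -/
/-!
Write `sin x + sin y = 2 sin ((x + y) / 2) cos ((x - y) / 2)`. Moving the two angles towards
each other by the same amount keeps the half-sum, whose sine is positive, and shrinks the
half-difference inside `[0, π]`, where cosine is strictly decreasing.
-/

open Real

theorem Real.sin_add_sin_lt_sin_sub_add_sin_add {x y d : ℝ} (hd : 0 < d) (hdxy : 2 * d ≤ x - y)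
    (hxy : x - y ≤ 2 * π) (hsum_pos : 0 < x + y) (hsum_lt : x + y < 2 * π) :
    sin x + sin y < sin (x - d) + sin (y + d) := by
  have hmid : ((x - d) + (y + d)) / 2 = (x + y) / 2 := by ring
  have hhalf : ((x - d) - (y + d)) / 2 = (x - y) / 2 - d := by ring
  rw [sin_add_sin, sin_add_sin, hmid, hhalf]
  have hsin : 0 < sin ((x + y) / 2) := sin_pos_of_pos_of_lt_pi (by linarith) (by linarith)
  have hcos : cos ((x - y) / 2) < cos ((x - y) / 2 - d) :=
    cos_lt_cos_of_nonneg_of_le_pi (by linarith) (by linarith) (by linarith)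
  gcongr

theorem stmt_0_general (a b n : ℕ)
    (hab : b + 2 ≤ a) (hsum : a + b < 2 * n) :
    sin (π * a / n) + sin (π * b / n) <
      sin (π * ((a : ℝ) - 1) / n) + sin (π * ((b : ℝ) + 1) / n) := by
  have hn : (0 : ℝ) < n := by exact_mod_cast (by omega : 0 < n)
  have hab' : (b : ℝ) + 2 ≤ a := by exact_mod_cast hab
  have hsum' : (a : ℝ) + b < 2 * n := by exact_mod_cast hsum
  set t := π / n
  have ht : 0 < t := by positivity
  have htn : t * n = π := div_mul_cancel₀ π hn.ne'
  have hmul (c : ℝ) : π * c / n = t * c := by ring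
  rw [hmul, hmul, hmul, hmul, mul_sub_one, mul_add_one]
  exact sin_add_sin_lt_sin_sub_add_sin_add ht (by nlinarith) (by nlinarith) (by nlinarith)
    (by nlinarith)

theorem stmt_0 (a b n : ℕ) (ha : 0 < a) (hb : 0 < b) (hn : 0 < n)
    (hab : b + 2 ≤ a) (hsum : a + b < 2 * n) :
    sin (π * a / n) + sin (π * b / n) <
      sin (π * ((a : ℝ) - 1) / n) + sin (π * ((b : ℝ) + 1) / n) :=
  stmt_0_general a b n hab hsum
end

section
/- Let m, k, q, r be positive integers with 3 ≤ k ≤ m, m = k·q + r and 0 ≤ r < k. Among all sequences (a_0, …, a_{k−1}) of positive integers with a_0 + ⋯ + a_{k−1} = m, the quantity (1/2)·Σ_{i=0}^{k−1} sin(π·a_i/n) (for any fixed n ≥ m/2, e.g. taking the arcs on a circle divided into m equal parts, i.e. replacing π/n by 2π/m) is maximized exactly when r of the a_i equal q+1 and the remaining k−r equal q. Concretely: if (a_0,…,a_{k−1}) are positive integers summing to m and maximizing Σ_i sin(2π·a_i/m) among all such sequences, then max_i a_i − min_i a_i ≤ 1. -/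
/-!
If two arcs differed by at least 2, moving one unit from the longer to the shorter would keep the
sequence admissible and strictly increase the sum of sines. Indeed
`sin x + sin y = 2 sin ((x + y) / 2) cos ((x - y) / 2)`: the first factor does not change and is
positive because, with `k ≥ 3`, the two arcs together are less than the whole circle, while the
second factor grows as `|x - y|` shrinks.
-/

open Real

namespace Real

theorem sin_add_sin_lt_sin_add_add_sin_sub {x y d : ℝ} (hd : 0 < d) (hx : 0 ≤ x)
    (hxy : x + 2 * d ≤ y) (hsum : x + y < 2 * π) :
    sin x + sin y < sin (x + d) + sin (y - d) := by
  have hsin : 0 < sin ((x + y) / 2) := sin_pos_of_pos_of_lt_pi (by linarith) (by linarith)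
  have hcos : cos ((x - y) / 2) < cos ((x + d - (y - d)) / 2) := by
    rw [← cos_neg, ← cos_neg ((x + d - (y - d)) / 2)]
    apply cos_lt_cos_of_nonneg_of_le_pi <;> linarith
  rw [sin_add_sin, sin_add_sin, show x + d + (y - d) = x + y by ring]
  gcongr

end Real

section

variable {ι α M : Type*} [Fintype ι] [DecidableEq ι] [AddCommMonoid M]

theorem Finset.sum_comp_update_add (f : α → M) (g : ι → α) (i : ι) (u : α) :
    ∑ x, f (Function.update g i u x) + f (g i) = ∑ x, f (g x) + f u := by
  have h := Finset.sum_update_of_mem (Finset.mem_univ i) (f ∘ g) (f u)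
  rw [← Function.comp_update] at h
  simp only [Function.comp_apply] at h
  rw [h, ← Finset.add_sum_erase _ _ (Finset.mem_univ i), Finset.sdiff_singleton_eq_erase]
  abel

theorem Finset.sum_comp_update_update_add (f : α → M) (g : ι → α) {i j : ι} (hij : i ≠ j)
    (u v : α) :
    ∑ x, f (Function.update (Function.update g i u) j v x) + (f (g i) + f (g j)) =
      ∑ x, f (g x) + (f u + f v) := by
  have hj := Finset.sum_comp_update_add f (Function.update g i u) j v
  have hi := Finset.sum_comp_update_add f g i u
  rw [Function.update_of_ne hij.symm] at hj
  calc _ = (∑ x, f (Function.update (Function.update g i u) j v x) + f (g j)) + f (g i) := by abel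
    _ = ∑ x, f (g x) + (f u + f v) := by rw [hj, add_right_comm, hi]; abel

end

theorem Finset.add_lt_sum_of_pos {ι M : Type*} [Fintype ι] [AddCommMonoid M] [PartialOrder M]
    [IsOrderedCancelAddMonoid M] (hι : 3 ≤ Fintype.card ι) {a : ι → M} (ha : ∀ x, 0 < a x)
    {i j : ι} (hij : i ≠ j) : a i + a j < ∑ x, a x := by
  classical
  obtain ⟨l, -, hl⟩ := Finset.exists_mem_notMem_of_card_lt_card
    (s := {i, j}) (t := Finset.univ) (by rw [Finset.card_pair hij, Finset.card_univ]; omega)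
  rw [← Finset.sum_pair hij]
  exact Finset.sum_lt_sum_of_subset (Finset.subset_univ _) (Finset.mem_univ l) hl (ha l)
    fun x _ _ => (ha x).le

theorem stmt_4_general (m k : ℕ) (hk : 3 ≤ k)
    (a : Fin k → ℕ) (hpos : ∀ i, 0 < a i) (hsum : ∑ i, a i = m)
    (hmax : ∀ b : Fin k → ℕ, (∀ i, 0 < b i) → (∑ i, b i = m) →
      ∑ i, sin (2 * π * b i / m) ≤ ∑ i, sin (2 * π * a i / m)) :
    ∀ i j, a i ≤ a j + 1 := by
  intro i j
  by_contra! hgap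
  have hij : i ≠ j := by rintro rfl; omega
  set b := Function.update (Function.update a i (a i - 1)) j (a j + 1)
  have hb_pos : ∀ x, 0 < b x := by
    intro x
    simp only [b, Function.update_apply]
    split_ifs <;> grind
  have hb_sum : ∑ x, b x = m := by
    have h : ∑ x, b x + (a i + a j) = ∑ x, a x + (a i - 1 + (a j + 1)) :=
      Finset.sum_comp_update_update_add id a hij _ _
    omega
  have hlt : a i + a j < m := hsum ▸ Finset.add_lt_sum_of_pos (by simpa using hk) hpos hij
  have hm : (0 : ℝ) < m := by exact_mod_cast (show 0 < m by omega)
  have hgain : sin (2 * π * a j / m) + sin (2 * π * a i / m) <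
      sin (2 * π * ↑(a j + 1) / m) + sin (2 * π * ↑(a i - 1) / m) := by
    have hgap' : (a j : ℝ) + 2 ≤ a i := by exact_mod_cast hgap
    have hlt' : (a i : ℝ) + a j < m := by exact_mod_cast hlt
    rw [Nat.cast_sub (by omega : 1 ≤ a i)]
    push_cast
    have hπ := pi_pos
    convert Real.sin_add_sin_lt_sin_add_add_sin_sub (x := 2 * π * a j / m) (y := 2 * π * a i / m)
      (d := 2 * π / m) (by positivity) (by positivity) ?_ ?_ using 3
    · ring
    · ring
    · rw [show 2 * π * a j / m + 2 * (2 * π / m) = 2 * π * (a j + 2) / m by ring]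
      gcongr
    · rw [show 2 * π * a j / m + 2 * π * a i / m = 2 * π * (a i + a j) / m by ring,
        div_lt_iff₀ hm]
      gcongr
  have hb_sin := Finset.sum_comp_update_update_add (fun n : ℕ => sin (2 * π * n / m)) a hij
    (a i - 1) (a j + 1)
  linarith [hmax b hb_pos hb_sum]

theorem stmt_4 (m k q r : ℕ) (hk : 3 ≤ k) (hkm : k ≤ m)
    (hm : m = k * q + r) (hr : r < k)
    (a : Fin k → ℕ) (hpos : ∀ i, 0 < a i) (hsum : ∑ i, a i = m)
    (hmax : ∀ b : Fin k → ℕ, (∀ i, 0 < b i) → (∑ i, b i = m) →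
      ∑ i, sin (2 * π * b i / m) ≤ ∑ i, sin (2 * π * a i / m)) :
    ∀ i j, a i ≤ a j + 1 :=
  stmt_4_general m k hk a hpos hsum hmax
end

section
/- Let n, k, q, r be positive integers with k odd, 2n = k·q + r, 0 ≤ r < k, and r even. Define the cyclic sequence of length k consisting of r/2 copies of q+1, followed by (k−r−1)/2 copies of q, followed by r/2 copies of q+1, followed by (k−r+1)/2 copies of q. Then no set of cyclically consecutive entries of this sequence sums to exactly n. -/
/-!
Write `r = 2u` and `k = 2u + 2m + 1`: the sequence is `q` plus the indicator of two blocks of `u`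
ones separated by gaps of lengths `m` and `m + 1`, and its total is `kq + 2u`. Cutting the cycle at
`0`, a window summing to half the total yields an interval `[x, y)` of `[0, k)` that does too (if
the window wraps around, take its complement). Let the interval have length `d` and contain `D`
ones. Then `2dq + 2D = kq + 2u`, so `q` is even and `(k - 2d) q / 2 = D - u` with `2d ≠ k`, as `k`
is odd. If `2d < k` then `D > u`, so the interval meets both blocks and covers the gap of length `m`
between them: `d ≥ D + m`, which forces `2d > k`. If `2d > k` then `D < u`, so the interval contains
no whole block and hence meets only one gap: `d ≤ D + m + 1`, which forces `2d < k`.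
-/

open Finset

section CyclicWindow

variable (a : ℕ → ℕ) {k : ℕ}

lemma sum_Ico_mod_of_le {x y : ℕ} (hy : y ≤ k) :
    ∑ i ∈ Ico x y, a (i % k) = ∑ i ∈ Ico x y, a i :=
  sum_congr rfl fun _ hi => by rw [Nat.mod_eq_of_lt ((mem_Ico.1 hi).2.trans_le hy)]

lemma exists_sum_Ico_eq_of_sum_range_mod_eq {n : ℕ} (hk : 0 < k)
    (htotal : ∑ i ∈ range k, a i = 2 * n) {s len : ℕ} (hlen : len ≤ k)
    (hs : ∑ t ∈ range len, a ((s + t) % k) = n) :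
    ∃ x y, x ≤ y ∧ y ≤ k ∧ ∑ i ∈ Ico x y, a i = n := by
  have hsk : s % k < k := Nat.mod_lt s hk
  have hwindow : ∑ i ∈ Ico (s % k) (s % k + len), a (i % k) = n := by
    simp only [sum_Ico_eq_sum_range, Nat.add_sub_cancel_left, Nat.mod_add_mod, hs]
  by_cases hwrap : s % k + len ≤ k
  · exact ⟨_, _, Nat.le_add_right _ _, hwrap, by rwa [sum_Ico_mod_of_le a hwrap] at hwindow⟩
  obtain ⟨b, hb⟩ : ∃ b, s % k + len = k + b := ⟨s % k + len - k, by omega⟩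
  refine ⟨b, s % k, by omega, hsk.le, ?_⟩
  have htail : ∑ i ∈ Ico k (k + b), a (i % k) = ∑ i ∈ range b, a i := by
    refine (sum_Ico_eq_sum_range _ _ _).trans (sum_congr (by simp) fun i hi => ?_)
    rw [Nat.add_mod_left, Nat.mod_eq_of_lt (by have := mem_range.1 hi; omega)]
  rw [hb, ← sum_Ico_consecutive _ hsk.le (Nat.le_add_right k b), htail,
    sum_Ico_mod_of_le a le_rfl] at hwindow
  have hhead := sum_range_add_sum_Ico a (show b ≤ s % k by omega)
  have hfull := sum_range_add_sum_Ico a hsk.le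
  omega

end CyclicWindow

section BlockSequence

def blockSeq (q u m i : ℕ) : ℕ :=
  if i < u then q + 1 else if i < u + m then q else if i < 2 * u + m then q + 1 else q

/-- The number of `i < j` with `blockSeq q u m i = q + 1`. -/
def bumpCount (u m j : ℕ) : ℕ :=
  min j u + (min j (2 * u + m) - min j (u + m))

lemma sum_range_blockSeq (q u m j : ℕ) :
    ∑ i ∈ range j, blockSeq q u m i = j * q + bumpCount u m j := by
  induction j with
  | zero => simp [bumpCount]
  | succ j ih =>
    rw [sum_range_succ, ih, add_mul, one_mul]
    unfold blockSeq bumpCount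
    split_ifs <;> omega

variable {u m x d : ℕ}

lemma bumpCount_add_le_of_gt (h : bumpCount u m x + u < bumpCount u m (x + d)) :
    bumpCount u m (x + d) + m ≤ bumpCount u m x + d := by
  unfold bumpCount at *; omega

lemma le_bumpCount_add_of_lt (hy : x + d ≤ 2 * u + 2 * m + 1)
    (h : bumpCount u m (x + d) < bumpCount u m x + u) :
    bumpCount u m x + d ≤ bumpCount u m (x + d) + m + 1 := by
  unfold bumpCount at *; omega

lemma two_mul_sum_Ico_blockSeq_ne {q y : ℕ} (hq : 0 < q) (hxy : x ≤ y)
    (hy : y ≤ 2 * u + 2 * m + 1) :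
    2 * ∑ i ∈ Ico x y, blockSeq q u m i ≠ (2 * u + 2 * m + 1) * q + 2 * u := by
  obtain ⟨d, rfl⟩ := Nat.exists_eq_add_of_le hxy
  have hsum := sum_range_add_sum_Ico (blockSeq q u m) hxy
  simp only [sum_range_blockSeq] at hsum
  intro h
  obtain ⟨q', rfl | rfl⟩ := Nat.even_or_odd' q
  · have key : (u : ℤ) - (bumpCount u m (x + d) - bumpCount u m x) =
        (2 * d - (2 * u + 2 * m + 1)) * q' := by
      linarith
    have hq' : (1 : ℤ) ≤ q' := by omega
    rcases lt_or_gt_of_ne (show 2 * d ≠ 2 * u + 2 * m + 1 by omega) with hshort | hlong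
    · have hscale : ((2 * d - (2 * u + 2 * m + 1) : ℤ)) * q' ≤ 2 * d - (2 * u + 2 * m + 1) := by
        nlinarith [show (2 * d : ℤ) < 2 * u + 2 * m + 1 by exact_mod_cast hshort]
      have hgap := bumpCount_add_le_of_gt (u := u) (m := m) (x := x) (d := d) (by omega)
      omega
    · have hscale : ((2 * d - (2 * u + 2 * m + 1) : ℤ)) * q' ≥ 2 * d - (2 * u + 2 * m + 1) := by
        nlinarith [show (2 * u + 2 * m + 1 : ℤ) < 2 * d by exact_mod_cast hlong]
      have hgap := le_bumpCount_add_of_lt hy (by omega)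
      omega
  · have hodd : (2 * u + 2 * m + 1) * (2 * q' + 1) =
        2 * ((2 * u + 2 * m + 1) * q') + 2 * u + 2 * m + 1 := by
      ring
    omega

end BlockSequence

theorem stmt_7_general (n k q r : ℕ) (hq : 0 < q)
    (hk : Odd k) (h2n : 2 * n = k * q + r) (hr : r < k) (hre : Even r)
    (a : ℕ → ℕ)
    (ha : ∀ i, a i =
      if i < r / 2 then q + 1
      else if i < r / 2 + (k - r - 1) / 2 then q
      else if i < r + (k - r - 1) / 2 then q + 1
      else q) :
    ∀ s len, 0 < len → len < k →
      (∑ t ∈ Finset.range len, a ((s + t) % k)) ≠ n := by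
  intro s len _ hlen hs
  obtain ⟨u, rfl⟩ := hre
  obtain ⟨m, hm⟩ : ∃ m, k = 2 * u + 2 * m + 1 := ⟨(k - (u + u) - 1) / 2, by grind⟩
  have hblock : a = blockSeq q u m := by
    funext i
    rw [ha, blockSeq]
    split_ifs <;> omega
  subst hblock hm
  have htotal : ∑ i ∈ range (2 * u + 2 * m + 1), blockSeq q u m i = 2 * n := by
    rw [sum_range_blockSeq, h2n, bumpCount]
    omega
  obtain ⟨x, y, hxy, hy, hsum⟩ :=
    exists_sum_Ico_eq_of_sum_range_mod_eq _ (by omega) htotal hlen.le hs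
  exact two_mul_sum_Ico_blockSeq_ne hq hxy hy (by rw [hsum, h2n, two_mul])

theorem stmt_7 (n k q r : ℕ) (hn : 0 < n) (hq : 0 < q) (hr0 : 0 < r)
    (hk : Odd k) (h2n : 2 * n = k * q + r) (hr : r < k) (hre : Even r)
    (a : ℕ → ℕ)
    (ha : ∀ i, a i =
      if i < r / 2 then q + 1
      else if i < r / 2 + (k - r - 1) / 2 then q
      else if i < r + (k - r - 1) / 2 then q + 1
      else q) :
    ∀ s len, 0 < len → len < k →
      (∑ t ∈ Finset.range len, a ((s + t) % k)) ≠ n :=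
  stmt_7_general n k q r hq hk h2n hr hre a ha
end

section
/- Let n, k, q, r be positive integers with k even, 2n = k·q + r, 0 ≤ r < k. Let (a_0,…,a_{k−1}) be any cyclic arrangement (permutation) of r copies of q+1 and k−r copies of q. Then there exists a block of cyclically consecutive entries summing to exactly n. Equivalently, defining f(i) = a_i + a_{i+1} + ⋯ + a_{i+k/2−1} (indices mod k), there exists an index j with f(j) = n. -/
/-!
Let `F j` be the sum of the `k / 2` cyclically consecutive entries starting at `j`. Moving the
window one step replaces one entry by another, and all entries are `q` or `q + 1`, so `F` changes
by at most one at each step. The windows starting at `0` and at `k / 2` partition the cycle, so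
`F 0 + F (k / 2) = k q + r = 2 n`: the value `n` lies between `F 0` and `F (k / 2)`, and the
discrete intermediate value theorem produces a window with sum exactly `n`.
-/

open Finset

theorem Nat.exists_eq_of_between_of_step_le_one {F : ℕ → ℕ}
    (hF : ∀ i, F (i + 1) ≤ F i + 1 ∧ F i ≤ F (i + 1) + 1) {n m : ℕ}
    (h₁ : min (F 0) (F m) ≤ n) (h₂ : n ≤ max (F 0) (F m)) : ∃ j ≤ m, F j = n := by
  induction m with
  | zero => exact ⟨0, le_rfl, by omega⟩
  | succ m ih =>
    by_cases hm : min (F 0) (F m) ≤ n ∧ n ≤ max (F 0) (F m)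
    · obtain ⟨j, hj, hFj⟩ := ih hm.1 hm.2
      exact ⟨j, hj.trans m.le_succ, hFj⟩
    · exact ⟨m + 1, le_rfl, by have := hF m; omega⟩

theorem Finset.sum_eq_card_mul_add_card_filter {ι : Type*} {s : Finset ι} {a : ι → ℕ} {q : ℕ}
    (ha : ∀ i ∈ s, a i = q ∨ a i = q + 1) :
    ∑ i ∈ s, a i = #s * q + #{i ∈ s | a i = q + 1} := by
  calc ∑ i ∈ s, a i = ∑ i ∈ s, (q + if a i = q + 1 then 1 else 0) :=
        sum_congr rfl fun i hi => by rcases ha i hi with h | h <;> simp [h]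
    _ = #s * q + #{i ∈ s | a i = q + 1} := by
        rw [sum_add_distrib, sum_const, smul_eq_mul, sum_boole, Nat.cast_id]

section CyclicWindow

variable {M : Type*} [AddCommMonoid M] (a : ℕ → M) (k m : ℕ)

def cyclicWindowSum (j : ℕ) : M := ∑ t ∈ range m, a ((j + t) % k)

theorem cyclicWindowSum_succ_add (j : ℕ) :
    cyclicWindowSum a k m (j + 1) + a (j % k) = cyclicWindowSum a k m j + a ((j + m) % k) := by
  have h := (sum_range_succ' (fun t => a ((j + t) % k)) m).symm.trans
    (sum_range_succ (fun t => a ((j + t) % k)) m)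
  simpa only [cyclicWindowSum, add_assoc, add_comm 1, add_zero] using h

theorem cyclicWindowSum_zero_add {l : ℕ} (h : m + l = k) :
    cyclicWindowSum a k m 0 + cyclicWindowSum a k l m = ∑ i ∈ range k, a i := by
  rw [← h, sum_range_add]
  congr 1 <;> refine sum_congr rfl fun t ht => ?_ <;> rw [mem_range] at ht
  · rw [zero_add, Nat.mod_eq_of_lt (by omega)]
  · rw [Nat.mod_eq_of_lt (by omega)]

end CyclicWindow

theorem cyclicWindowSum_step_le_one {a : ℕ → ℕ} {k q : ℕ} (hk : 0 < k)
    (ha : ∀ i < k, a i = q ∨ a i = q + 1) (m i : ℕ) :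
    cyclicWindowSum a k m (i + 1) ≤ cyclicWindowSum a k m i + 1 ∧
      cyclicWindowSum a k m i ≤ cyclicWindowSum a k m (i + 1) + 1 := by
  have h := cyclicWindowSum_succ_add a k m i
  have h₁ := ha (i % k) (Nat.mod_lt _ hk)
  have h₂ := ha ((i + m) % k) (Nat.mod_lt _ hk)
  omega

theorem stmt_9_general (n k q r : ℕ)
    (hke : Even k) (hk : 0 < k) (h2n : 2 * n = k * q + r)
    (a : ℕ → ℕ)
    (hval : ∀ i, i < k → a i = q ∨ a i = q + 1)
    (hcard : ((Finset.range k).filter (fun i => a i = q + 1)).card = r) :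
    ∃ j, j < k ∧ (∑ t ∈ Finset.range (k / 2), a ((j + t) % k)) = n := by
  obtain ⟨m, rfl⟩ := hke
  have hm : (m + m) / 2 = m := by omega
  have hsum : cyclicWindowSum a (m + m) m 0 + cyclicWindowSum a (m + m) m m = 2 * n := by
    have h := sum_eq_card_mul_add_card_filter fun i hi => hval i (mem_range.mp hi)
    rw [card_range, hcard] at h
    rw [cyclicWindowSum_zero_add a _ _ rfl, h, h2n]
  obtain ⟨j, hjm, hj⟩ := Nat.exists_eq_of_between_of_step_le_one
    (cyclicWindowSum_step_le_one hk hval m) (n := n) (m := m) (by omega) (by omega)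
  exact ⟨j, by omega, by rw [hm]; exact hj⟩

theorem stmt_9 (n k q r : ℕ) (hn : 0 < n) (hq : 0 < q) (hr0 : 0 < r)
    (hke : Even k) (hk : 0 < k) (h2n : 2 * n = k * q + r) (hr : r < k)
    (a : ℕ → ℕ)
    (hval : ∀ i, i < k → a i = q ∨ a i = q + 1)
    (hcard : ((Finset.range k).filter (fun i => a i = q + 1)).card = r) :
    ∃ j, j < k ∧ (∑ t ∈ Finset.range (k / 2), a ((j + t) % k)) = n :=
  stmt_9_general n k q r hke hk h2n a hval hcard
end

section
/- Let n, k, q, r be positive integers with k even, k ≥ 4, 2n = k·q + r, 0 ≤ r < k, q ≥ 2. Define the cyclic sequence of length k: one copy of q−1, then r/2 copies of q+1, then (k−r−2)/2 copies of q, then (r+2)/2 copies of q+1, then (k−r−2)/2 copies of q (here r is even since 2n − kq with k even; assume r even). Then the entries sum to 2n and no block of cyclically consecutive entries sums to exactly n. -/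
/-!
Write `k = 2h` and `r = 2ρ`, so that `n = hq + ρ`. On `[0, k)` the sequence is `q + [i mod h ≤ ρ]`,
except that `a₀` is lowered by `2`. Every `h` cyclically consecutive entries of the `h`-periodic
sequence `q + [i mod h ≤ ρ]` sum to `hq + ρ + 1 = n + 1`. Hence a block of exactly `h` entries sums
to `n + 1` or `n - 1`, a shorter block sums to at most `(h - 1)q + ρ + 1 < n` because `q ≥ 2`, and
a longer block is the complement of a shorter one, so its sum exceeds `n`.
-/

open Finset

section CyclicSums

variable {M : Type*} [AddCommMonoid M]

theorem Finset.sum_range_add_mod (f : ℕ → M) (s m : ℕ) :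
    ∑ t ∈ range m, f ((s + t) % m) = ∑ i ∈ range m, f i := calc
  _ = ∑ x ∈ Ico s (s + m), f (x % m) := by rw [sum_Ico_eq_sum_range, Nat.add_sub_cancel_left]
  _ = ∑ i ∈ (Ico s (s + m)).image (· % m), f i := (sum_image (Nat.mod_injOn_Ico s m)).symm
  _ = _ := by rw [Nat.image_Ico_mod]

theorem Finset.sum_range_add_add (g : ℕ → M) (s L L' : ℕ) :
    ∑ t ∈ range (L + L'), g (s + t) =
      ∑ t ∈ range L, g (s + t) + ∑ t ∈ range L', g (s + L + t) := by
  simp only [sum_range_add, add_assoc]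

theorem Finset.sum_range_add_mod_le [PartialOrder M] [CanonicallyOrderedAdd M] (f : ℕ → M)
    {s L m : ℕ} (hL : L ≤ m) : ∑ t ∈ range L, f ((s + t) % m) ≤ ∑ i ∈ range m, f i :=
  sum_range_add_mod f s m ▸ sum_le_sum_of_subset (range_subset_range.mpr hL)

end CyclicSums

theorem Finset.sum_range_ite_eq_zero_eq_one {m : ℕ} (hm : 0 < m) :
    ∑ i ∈ range m, (if i = 0 then 1 else 0) = 1 := by
  simp [hm]

theorem Finset.sum_range_ite_le_eq_succ {ρ h : ℕ} (hρ : ρ < h) :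
    ∑ i ∈ range h, (if i ≤ ρ then 1 else 0) = ρ + 1 := by
  rw [sum_boole, Nat.cast_id, ← card_range (ρ + 1)]
  congr 1
  ext i
  simp only [mem_filter, mem_range]
  omega

/-- `a j = q + [j % h ≤ ρ] - 2 [j = 0]` for `j < 2h`, with the subtraction moved to the left. -/
def IsPeriodicDipAtZero (a : ℕ → ℕ) (h ρ q : ℕ) : Prop :=
  ∀ j < 2 * h, a j + 2 * (if j = 0 then 1 else 0) = q + if j % h ≤ ρ then 1 else 0

namespace IsPeriodicDipAtZero

variable {a : ℕ → ℕ} {h ρ q : ℕ}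

theorem blockSum_add_two_mul (ha : IsPeriodicDipAtZero a h ρ q) (hh : 0 < h) (s L : ℕ) :
    ∑ t ∈ range L, a ((s + t) % (2 * h)) +
        2 * ∑ t ∈ range L, (if (s + t) % (2 * h) = 0 then 1 else 0) =
      L * q + ∑ t ∈ range L, if (s + t) % h ≤ ρ then 1 else 0 := by
  have hterm (t : ℕ) : a ((s + t) % (2 * h)) + 2 * (if (s + t) % (2 * h) = 0 then 1 else 0) =
      q + if (s + t) % h ≤ ρ then 1 else 0 := by
    rw [← Nat.mod_mod_of_dvd (s + t) (dvd_mul_left h 2)]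
    exact ha _ (Nat.mod_lt _ (by omega))
  rw [mul_sum, ← sum_add_distrib, sum_congr rfl fun t _ => hterm t, sum_add_distrib, sum_const,
    card_range, smul_eq_mul]

theorem blockSum_lt (ha : IsPeriodicDipAtZero a h ρ q) (hq : 2 ≤ q) (hρ : ρ < h) (s : ℕ)
    {L : ℕ} (hL : L < h) :
    ∑ t ∈ range L, a ((s + t) % (2 * h)) < h * q + ρ := by
  have hsum := ha.blockSum_add_two_mul (by omega) s L
  have hcount : ∑ t ∈ range L, (if (s + t) % h ≤ ρ then 1 else 0) ≤ ρ + 1 :=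
    (sum_range_add_mod_le (fun i => if i ≤ ρ then 1 else 0) hL.le).trans_eq
      (sum_range_ite_le_eq_succ hρ)
  have hLq : (L + 1) * q ≤ h * q := Nat.mul_le_mul_right q hL
  rw [add_mul] at hLq
  omega

theorem blockSum_half_ne (ha : IsPeriodicDipAtZero a h ρ q) (hρ : ρ < h) (s : ℕ) :
    ∑ t ∈ range h, a ((s + t) % (2 * h)) ≠ h * q + ρ := by
  have hsum := ha.blockSum_add_two_mul (by omega) s h
  have hcount : ∑ t ∈ range h, (if (s + t) % h ≤ ρ then 1 else 0) = ρ + 1 := by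
    rw [sum_range_add_mod (fun i => if i ≤ ρ then 1 else 0), sum_range_ite_le_eq_succ hρ]
  have hzero : ∑ t ∈ range h, (if (s + t) % (2 * h) = 0 then 1 else 0) ≤ 1 :=
    (sum_range_add_mod_le (fun i => if i = 0 then 1 else 0) (by omega)).trans_eq
      (sum_range_ite_eq_zero_eq_one (by omega))
  -- the block sum is `h * q + ρ + 1` or `h * q + ρ - 1`
  omega

theorem blockSum_full (ha : IsPeriodicDipAtZero a h ρ q) (hρ : ρ < h) (s : ℕ) :
    ∑ t ∈ range (2 * h), a ((s + t) % (2 * h)) = 2 * (h * q + ρ) := by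
  have hsum := ha.blockSum_add_two_mul (by omega) s (2 * h)
  have hcount : ∑ t ∈ range (2 * h), (if (s + t) % h ≤ ρ then 1 else 0) = 2 * (ρ + 1) := by
    rw [two_mul h, sum_range_add_add (fun i => if i % h ≤ ρ then 1 else 0),
      sum_range_add_mod (fun i => if i ≤ ρ then 1 else 0),
      sum_range_add_mod (fun i => if i ≤ ρ then 1 else 0), sum_range_ite_le_eq_succ hρ]
    ring
  have hzero : ∑ t ∈ range (2 * h), (if (s + t) % (2 * h) = 0 then 1 else 0) = 1 := by
    rw [sum_range_add_mod (fun i => if i = 0 then 1 else 0),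
      sum_range_ite_eq_zero_eq_one (by omega)]
  rw [hcount, hzero, mul_assoc] at hsum
  omega

theorem blockSum_ne (ha : IsPeriodicDipAtZero a h ρ q) (hq : 2 ≤ q) (hρ : ρ < h)
    (s : ℕ) {L : ℕ} (hL : L < 2 * h) :
    ∑ t ∈ range L, a ((s + t) % (2 * h)) ≠ h * q + ρ := by
  rcases lt_trichotomy L h with hlt | rfl | hgt
  · exact (ha.blockSum_lt hq hρ s hlt).ne
  · exact ha.blockSum_half_ne hρ s
  · have hsplit := sum_range_add_add (fun i => a (i % (2 * h))) s L (2 * h - L)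
    rw [Nat.add_sub_cancel' hL.le, ha.blockSum_full hρ s] at hsplit
    have hcompl := ha.blockSum_lt hq hρ (s + L) (L := 2 * h - L) (by omega)
    omega

end IsPeriodicDipAtZero

theorem stmt_14_general (n k q r : ℕ)
    (hke : Even k) (h2n : 2 * n = k * q + r) (hr : r < k)
    (hq : 2 ≤ q) (hre : Even r)
    (a : ℕ → ℕ)
    (ha : ∀ i, a i =
      if i = 0 then q - 1
      else if i < 1 + r / 2 then q + 1
      else if i < 1 + r / 2 + (k - r - 2) / 2 then q
      else if i < 1 + r / 2 + (k - r - 2) / 2 + (r + 2) / 2 then q + 1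
      else q) :
    (∑ i ∈ Finset.range k, a i) = 2 * n ∧
      ∀ s len, 0 < len → len < k →
        (∑ t ∈ Finset.range len, a ((s + t) % k)) ≠ n := by
  obtain ⟨h, rfl⟩ : ∃ h, k = 2 * h := hke.exists_two_nsmul k
  obtain ⟨ρ, rfl⟩ : ∃ ρ, r = 2 * ρ := hre.exists_two_nsmul r
  have hρ : ρ < h := by omega
  have hn : n = h * q + ρ := by
    rw [mul_assoc] at h2n
    omega
  have hdip : IsPeriodicDipAtZero a h ρ q := by
    intro j hj
    have hjh : j % h = if j < h then j else j - h := by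
      split_ifs with hjh
      · exact Nat.mod_eq_of_lt hjh
      · rw [Nat.mod_eq_sub_mod (by omega), Nat.mod_eq_of_lt (by omega)]
    rw [ha j, hjh]
    split_ifs <;> omega
  subst hn
  refine ⟨?_, fun s len _ hlen => hdip.blockSum_ne hq hρ s hlen⟩
  simpa only [sum_range_add_mod a] using hdip.blockSum_full hρ 0

theorem stmt_14 (n k q r : ℕ) (hn : 0 < n) (hr0 : 0 < r)
    (hke : Even k) (hk4 : 4 ≤ k) (h2n : 2 * n = k * q + r) (hr : r < k)
    (hq : 2 ≤ q) (hre : Even r)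
    (a : ℕ → ℕ)
    (ha : ∀ i, a i =
      if i = 0 then q - 1
      else if i < 1 + r / 2 then q + 1
      else if i < 1 + r / 2 + (k - r - 2) / 2 then q
      else if i < 1 + r / 2 + (k - r - 2) / 2 + (r + 2) / 2 then q + 1
      else q) :
    (∑ i ∈ Finset.range k, a i) = 2 * n ∧
      ∀ s len, 0 < len → len < k →
        (∑ t ∈ Finset.range len, a ((s + t) % k)) ≠ n :=
  stmt_14_general n k q r hke h2n hr hq hre a ha
end

section
/- Let a, b, c, d, a', e, f, d' be points appearing in this clockwise order on a circle, where aa' and dd' are diameters. If the distance from d to the line ae is greater than the distance from c to the line ae, then the distance from d to the line bf is greater than the distance from c to the line bf. -/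
/-!
The point at angle `m + g` on the circle of center `o` and radius `ρ` lies at distance
`|ρ| * |cos g - cos δ|` from the chord through the points at angles `m ± δ`, since that chord is
orthogonal to the radius at angle `m`. For points on the arc cut off by the chord, the one
closer in angle to the arc midpoint `m` is therefore the farther one; so `d` (at `t₄ < t₃`) is
farther than `c` from the chord iff the angle of the arc midpoint is less than `(t₃ + t₄) / 2`.
Going from the chord `a e` to the chord `b f` moves both endpoints, hence the midpoint, clockwise.
-/

open Real

/-- The point of the unit circle at angle `θ`. -/
noncomputable def unitPt (θ : ℝ) : EuclideanSpace ℝ (Fin 2) :=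
  (WithLp.equiv 2 (Fin 2 → ℝ)).symm ![Real.cos θ, Real.sin θ]

theorem EuclideanGeometry.infDist_eq_dist_of_mem_of_vsub_mem_orthogonal
    {V P : Type*} [NormedAddCommGroup V] [InnerProductSpace ℝ V] [MetricSpace P]
    [NormedAddTorsor V P] {s : AffineSubspace ℝ P} [s.direction.HasOrthogonalProjection]
    {p q : P} (hq : q ∈ s) (hpq : p -ᵥ q ∈ s.directionᗮ) :
    Metric.infDist p s = dist p q := by
  have : Nonempty s := ⟨⟨q, hq⟩⟩
  rw [← dist_orthogonalProjection_eq_infDist, coe_orthogonalProjection_eq_iff_mem.2 ⟨hq, hpq⟩]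

lemma norm_unitPt (θ : ℝ) : ‖unitPt θ‖ = 1 := by
  simp [EuclideanSpace.norm_eq, unitPt, Fin.sum_univ_two]

lemma inner_unitPt_sub_unitPt (m δ : ℝ) :
    inner ℝ (unitPt (m + δ) - unitPt (m - δ)) (unitPt m) = 0 := by
  simp [unitPt, PiLp.inner_apply, Fin.sum_univ_two, cos_add, sin_add, cos_sub, sin_sub]
  ring

lemma unitPt_add_eq_lineMap_add (m δ g : ℝ) (hδ : sin δ ≠ 0) :
    unitPt (m + g) = AffineMap.lineMap (unitPt (m + δ)) (unitPt (m - δ))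
        ((sin δ - sin g) / (2 * sin δ)) + (cos g - cos δ) • unitPt m := by
  ext i
  fin_cases i <;> simp [unitPt, AffineMap.lineMap_apply, cos_add, sin_add, cos_sub, sin_sub] <;>
    field_simp <;> ring

open EuclideanGeometry in
theorem infDist_circle_chord (o : EuclideanSpace ℝ (Fin 2)) (ρ m δ g : ℝ) (hδ : sin δ ≠ 0) :
    Metric.infDist (o + ρ • unitPt (m + g))
        (affineSpan ℝ {o + ρ • unitPt (m + δ), o + ρ • unitPt (m - δ)} :
          Set (EuclideanSpace ℝ (Fin 2))) =
      |ρ| * |cos g - cos δ| := by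
  set A := o + ρ • unitPt (m + δ)
  set B := o + ρ • unitPt (m - δ)
  have hfoot : o + ρ • unitPt (m + g) - (ρ * (cos g - cos δ)) • unitPt m =
      AffineMap.lineMap A B ((sin δ - sin g) / (2 * sin δ)) := by
    rw [unitPt_add_eq_lineMap_add m δ g hδ]
    simp only [A, B, AffineMap.lineMap_apply, vsub_eq_sub, vadd_eq_add]
    module
  rw [infDist_eq_dist_of_mem_of_vsub_mem_orthogonal
    (AffineMap.lineMap_mem_affineSpan_pair _ A B), ← hfoot]
  · simp [norm_smul, norm_unitPt]
  · rw [← hfoot, direction_affineSpan, vectorSpan_pair,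
      Submodule.mem_orthogonal_singleton_iff_inner_right]
    simp only [A, B, vsub_eq_sub, sub_sub_cancel, add_sub_add_left_eq_sub, ← smul_sub,
      real_inner_smul_left, real_inner_smul_right, inner_unitPt_sub_unitPt, mul_zero]

lemma cos_lt_cos_of_abs_lt {x δ : ℝ} (hx : |x| < δ) (hδ : δ ≤ π) : cos δ < cos x := by
  rw [← cos_abs x]
  exact strictAntiOn_cos ⟨abs_nonneg x, by linarith⟩ ⟨(abs_nonneg x).trans hx.le, hδ⟩ hx

theorem infDist_circle_chord_lt_iff (o : EuclideanSpace ℝ (Fin 2)) {ρ α β γ γ' : ℝ}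
    (hρ : ρ ≠ 0) (hαγ' : α < γ') (hγ'γ : γ' < γ) (hγβ : γ < β) (hβα : β - α < 2 * π) :
    Metric.infDist (o + ρ • unitPt γ)
        (affineSpan ℝ {o + ρ • unitPt β, o + ρ • unitPt α} : Set (EuclideanSpace ℝ (Fin 2))) <
      Metric.infDist (o + ρ • unitPt γ')
        (affineSpan ℝ {o + ρ • unitPt β, o + ρ • unitPt α} : Set (EuclideanSpace ℝ (Fin 2))) ↔
      α + β < γ + γ' := by
  obtain ⟨m, δ, rfl, rfl⟩ : ∃ m δ, β = m + δ ∧ α = m - δ :=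
    ⟨(β + α) / 2, (β - α) / 2, by ring, by ring⟩
  obtain ⟨g, rfl⟩ : ∃ g, γ = m + g := ⟨γ - m, by ring⟩
  obtain ⟨g', rfl⟩ : ∃ g', γ' = m + g' := ⟨γ' - m, by ring⟩
  have hδπ : δ ≤ π := by linarith
  have hg : |g| < δ := abs_lt.2 ⟨by linarith, by linarith⟩
  have hg' : |g'| < δ := abs_lt.2 ⟨by linarith, by linarith⟩
  have hsin : sin δ ≠ 0 := (sin_pos_of_pos_of_lt_pi (by linarith) (by linarith)).ne'
  rw [infDist_circle_chord o ρ m δ g hsin, infDist_circle_chord o ρ m δ g' hsin,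
    abs_of_pos (sub_pos.2 (cos_lt_cos_of_abs_lt hg hδπ)),
    abs_of_pos (sub_pos.2 (cos_lt_cos_of_abs_lt hg' hδπ)),
    mul_lt_mul_iff_right₀ (abs_pos.2 hρ), sub_lt_sub_iff_right, ← cos_abs g, ← cos_abs g',
    strictAntiOn_cos.lt_iff_gt ⟨abs_nonneg g, by linarith⟩ ⟨abs_nonneg g', by linarith⟩,
    ← sq_lt_sq]
  constructor <;> intro h <;> nlinarith

theorem stmt_17_general (o : EuclideanSpace ℝ (Fin 2)) (ρ : ℝ)
    (t₁ t₂ t₃ t₄ t₅ t₆ t₇ t₈ : ℝ)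
    (h12 : t₂ < t₁) (h23 : t₃ < t₂) (h34 : t₄ < t₃) (h45 : t₅ < t₄)
    (h56 : t₆ < t₅) (h67 : t₇ < t₆) (h78 : t₈ < t₇) (hwrap : t₁ - t₈ < 2 * π)
    (a : EuclideanSpace ℝ (Fin 2)) (ha : a = o + ρ • unitPt t₁)
    (b : EuclideanSpace ℝ (Fin 2)) (hb : b = o + ρ • unitPt t₂)
    (c : EuclideanSpace ℝ (Fin 2)) (hc : c = o + ρ • unitPt t₃)
    (d : EuclideanSpace ℝ (Fin 2)) (hd : d = o + ρ • unitPt t₄)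
    (e : EuclideanSpace ℝ (Fin 2)) (he : e = o + ρ • unitPt t₆)
    (f : EuclideanSpace ℝ (Fin 2)) (hf : f = o + ρ • unitPt t₇)
    (hfar : Metric.infDist c (affineSpan ℝ {a, e} : Set (EuclideanSpace ℝ (Fin 2))) <
      Metric.infDist d (affineSpan ℝ {a, e} : Set (EuclideanSpace ℝ (Fin 2)))) :
    Metric.infDist c (affineSpan ℝ {b, f} : Set (EuclideanSpace ℝ (Fin 2))) <
      Metric.infDist d (affineSpan ℝ {b, f} : Set (EuclideanSpace ℝ (Fin 2))) := by
  subst ha hb hc hd he hf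
  have hρ : ρ ≠ 0 := by
    rintro rfl
    simp at hfar
  rw [infDist_circle_chord_lt_iff o hρ (by linarith) h34 (by linarith) (by linarith)] at hfar ⊢
  linarith

/-- Points `a, b, c, d, a', e, f, d'` in clockwise order on a circle of center `o` and
radius `ρ`, with `a a'` and `d d'` diameters: if `d` is farther than `c` from line `a e`,
then `d` is farther than `c` from line `b f`. -/
theorem stmt_17 (o : EuclideanSpace ℝ (Fin 2)) (ρ : ℝ) (hρ : 0 < ρ)
    (t₁ t₂ t₃ t₄ t₅ t₆ t₇ t₈ : ℝ)
    (h12 : t₂ < t₁) (h23 : t₃ < t₂) (h34 : t₄ < t₃) (h45 : t₅ < t₄)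
    (h56 : t₆ < t₅) (h67 : t₇ < t₆) (h78 : t₈ < t₇) (hwrap : t₁ - t₈ < 2 * π)
    (hdiamA : t₅ = t₁ - π) (hdiamD : t₈ = t₄ - π)
    (a : EuclideanSpace ℝ (Fin 2)) (ha : a = o + ρ • unitPt t₁)
    (b : EuclideanSpace ℝ (Fin 2)) (hb : b = o + ρ • unitPt t₂)
    (c : EuclideanSpace ℝ (Fin 2)) (hc : c = o + ρ • unitPt t₃)
    (d : EuclideanSpace ℝ (Fin 2)) (hd : d = o + ρ • unitPt t₄)
    (e : EuclideanSpace ℝ (Fin 2)) (he : e = o + ρ • unitPt t₆)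
    (f : EuclideanSpace ℝ (Fin 2)) (hf : f = o + ρ • unitPt t₇)
    (hfar : Metric.infDist c (affineSpan ℝ {a, e} : Set (EuclideanSpace ℝ (Fin 2))) <
      Metric.infDist d (affineSpan ℝ {a, e} : Set (EuclideanSpace ℝ (Fin 2)))) :
    Metric.infDist c (affineSpan ℝ {b, f} : Set (EuclideanSpace ℝ (Fin 2))) <
      Metric.infDist d (affineSpan ℝ {b, f} : Set (EuclideanSpace ℝ (Fin 2))) :=
  stmt_17_general o ρ t₁ t₂ t₃ t₄ t₅ t₆ t₇ t₈ h12 h23 h34 h45 h56 h67 h78 hwrap a ha b hb c hc d hd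
    e he f hf hfar
end

section
/- Let k be an odd positive integer and let (a_0,…,a_{k−1}) be a cyclic sequence of positive integers with total sum 2n such that a_i = a_{i+(k−1)/2} for all 0 ≤ i < (k−1)/2 (indices taken in the underlying arrangement, with a_{k−1} having no homologous partner), and such that for every pair of indices the element a_{k−1} and any two elements a_i, a_j satisfy a_i + a_j > a_{k−1} when they are the extra elements in a split. Then for any partition of the cyclic sequence into two blocks A, B of consecutive elements with |A| ≤ (k−1)/2, the sum of A is strictly less than n. -/
/-!
Write `k = 2m + 1` and let `σ = homolog m` swap `i` and `i + m` for `i < m`, so that `a ∘ σ = a` on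
`[0, 2m)`; the index `2m` has no partner. Since `σ i` and `i` are at cyclic distance `m`, a
cyclic block `B` of length `len ≤ m` is mapped by `σ` (away from `2m`) into its complement,
which has at least `len + 1` elements. If `2m ∉ B`, this leaves a positive term of the
complement unmatched. If `2m ∈ B`, two terms of the complement are unmatched and their sum
exceeds `a (2m)`. Either way the block sums to less than its complement, i.e. to less than `n`.
-/

open Finset

theorem Finset.add_sum_lt_sum_of_injOn {ι : Type*} [DecidableEq ι] {a : ι → ℕ}
    {s t E : Finset ι} {f : ι → ι} {c : ℕ} (hf : ∀ x ∈ s, f x ∈ t) (hinj : Set.InjOn f s)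
    (ha : ∀ x ∈ s, a (f x) = a x) (hE : E ⊆ t \ s.image f) (hc : c < ∑ x ∈ E, a x) :
    c + ∑ x ∈ s, a x < ∑ x ∈ t, a x := by
  have himage : ∑ x ∈ s.image f, a x = ∑ x ∈ s, a x := by
    rw [sum_image hinj]
    exact sum_congr rfl ha
  have hdisj : Disjoint E (s.image f) := disjoint_of_subset_left hE disjoint_sdiff_self_left
  have hsub : E ∪ s.image f ⊆ t :=
    union_subset (hE.trans sdiff_subset) (image_subset_iff.mpr hf)
  calc c + ∑ x ∈ s, a x < ∑ x ∈ E, a x + ∑ x ∈ s.image f, a x := by omega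
    _ = ∑ x ∈ E ∪ s.image f, a x := (sum_union hdisj).symm
    _ ≤ ∑ x ∈ t, a x := sum_le_sum_of_subset hsub

def cyclicBlock (k s len : ℕ) : Finset ℕ := (range len).image fun t => (s + t) % k

section CyclicBlock

variable {k s len : ℕ}

theorem injOn_add_mod (h : len ≤ k) : Set.InjOn (fun t => (s + t) % k) (range len) := by
  intro t₁ ht₁ t₂ ht₂ heq
  simp only [coe_range, Set.mem_Iio] at ht₁ ht₂
  exact (Nat.ModEq.add_left_cancel' s heq).eq_of_lt_of_lt (by omega) (by omega)

theorem card_cyclicBlock (h : len ≤ k) : #(cyclicBlock k s len) = len := by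
  rw [cyclicBlock, card_image_of_injOn (injOn_add_mod h), card_range]

theorem sum_cyclicBlock (a : ℕ → ℕ) (h : len ≤ k) :
    ∑ x ∈ cyclicBlock k s len, a x = ∑ t ∈ range len, a ((s + t) % k) :=
  sum_image (injOn_add_mod h)

theorem cyclicBlock_subset_range (hk : 0 < k) : cyclicBlock k s len ⊆ range k := by
  intro x hx
  obtain ⟨t, -, rfl⟩ := mem_image.mp hx
  exact mem_range.mpr (Nat.mod_lt _ hk)

theorem add_ne_of_mem_cyclicBlock {m x y : ℕ} (hlen : len ≤ m)
    (hx : x ∈ cyclicBlock (2 * m + 1) s len) (hy : y ∈ cyclicBlock (2 * m + 1) s len) :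
    x + m ≠ y := by
  obtain ⟨t₁, ht₁, rfl⟩ := mem_image.mp hx
  obtain ⟨t₂, ht₂, rfl⟩ := mem_image.mp hy
  rw [mem_range] at ht₁ ht₂
  intro heq
  have hmod : s + (t₁ + m) ≡ s + t₂ [MOD 2 * m + 1] := by
    have h := ((Nat.mod_modEq (s + t₁) (2 * m + 1)).add_right m).symm
    rw [heq, add_assoc] at h
    exact h.trans (Nat.mod_modEq _ _)
  have := (Nat.ModEq.add_left_cancel' s hmod).eq_of_lt_of_lt (by omega) (by omega)
  omega

end CyclicBlock

def homolog (m i : ℕ) : ℕ := if i < m then i + m else i - m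

section Homolog

variable {m : ℕ}

theorem homolog_lt {i : ℕ} (hi : i < 2 * m) : homolog m i < 2 * m := by
  unfold homolog; split_ifs <;> omega

theorem injOn_homolog : Set.InjOn (homolog m) (Set.Iio (2 * m)) := by
  intro i hi j hj heq
  rw [Set.mem_Iio] at hi hj
  unfold homolog at heq; split_ifs at heq <;> omega

theorem homolog_add_eq_or (i : ℕ) :
    homolog m i + m = i ∨ i + m = homolog m i := by
  unfold homolog; split_ifs <;> omega

theorem apply_homolog {a : ℕ → ℕ} (hhom : ∀ i, i < m → a i = a (i + m)) {i : ℕ}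
    (hi : i < 2 * m) : a (homolog m i) = a i := by
  unfold homolog
  split_ifs with h
  · exact (hhom i h).symm
  · rw [hhom (i - m) (by omega), Nat.sub_add_cancel (not_lt.mp h)]

theorem homolog_not_mem_cyclicBlock {s len i : ℕ} (hlen : len ≤ m)
    (hB : i ∈ cyclicBlock (2 * m + 1) s len) : homolog m i ∉ cyclicBlock (2 * m + 1) s len := by
  intro hσ
  rcases homolog_add_eq_or i with h | h
  · exact add_ne_of_mem_cyclicBlock hlen hσ hB h
  · exact add_ne_of_mem_cyclicBlock hlen hB hσ h

end Homolog

theorem add_sum_lt_sum_compl_cyclicBlock {m s len : ℕ} (hlen : len ≤ m) {a : ℕ → ℕ}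
    (hhom : ∀ i, i < m → a i = a (i + m)) {S : Finset ℕ}
    (hSB : S ⊆ cyclicBlock (2 * m + 1) s len) (hS : ∀ x ∈ S, x < 2 * m) {c r : ℕ}
    (hr : r + len + #S ≤ 2 * m + 1)
    (hc : ∀ E ⊆ range (2 * m + 1), #E = r → c < ∑ x ∈ E, a x) :
    c + ∑ x ∈ S, a x < ∑ x ∈ range (2 * m + 1) \ cyclicBlock (2 * m + 1) s len, a x := by
  set B := cyclicBlock (2 * m + 1) s len
  have hBsub : B ⊆ range (2 * m + 1) := cyclicBlock_subset_range (by omega)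
  have hmaps : ∀ x ∈ S, homolog m x ∈ range (2 * m + 1) \ B := fun x hx =>
    mem_sdiff.mpr ⟨mem_range.mpr (by have := homolog_lt (hS x hx); omega),
      homolog_not_mem_cyclicBlock hlen (hSB hx)⟩
  have hinj : Set.InjOn (homolog m) S := injOn_homolog.mono hS
  have hfree : r ≤ #((range (2 * m + 1) \ B) \ S.image (homolog m)) := by
    rw [card_sdiff_of_subset (image_subset_iff.mpr hmaps), card_sdiff_of_subset hBsub,
      card_range, card_cyclicBlock (by omega), card_image_of_injOn hinj]
    omega
  obtain ⟨E, hE, hcardE⟩ := exists_subset_card_eq hfree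
  exact add_sum_lt_sum_of_injOn hmaps hinj (fun x hx => apply_homolog hhom (hS x hx)) hE
    (hc E (hE.trans (sdiff_subset.trans sdiff_subset)) hcardE)

theorem sum_cyclicBlock_lt_sum_compl {m s len : ℕ} (hlen : len ≤ m) (a : ℕ → ℕ)
    (hpos : ∀ i, i < 2 * m + 1 → 0 < a i)
    (hhom : ∀ i, i < m → a i = a (i + m))
    (hextra : ∀ i j, i < 2 * m + 1 → j < 2 * m + 1 → i ≠ j → a (2 * m) < a i + a j) :
    ∑ x ∈ cyclicBlock (2 * m + 1) s len, a x
      < ∑ x ∈ range (2 * m + 1) \ cyclicBlock (2 * m + 1) s len, a x := by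
  set B := cyclicBlock (2 * m + 1) s len
  have hcardB : #B = len := card_cyclicBlock (by omega)
  have hBlt : ∀ x ∈ B, x < 2 * m + 1 := fun x hx =>
    mem_range.mp (cyclicBlock_subset_range (by omega) hx)
  by_cases hmB : 2 * m ∈ B
  · have hS : ∀ x ∈ B.erase (2 * m), x < 2 * m := fun x hx => by
      have := hBlt x (mem_of_mem_erase hx)
      have := ne_of_mem_erase hx
      omega
    have hcardS : #(B.erase (2 * m)) + 1 = len := by
      rw [card_erase_add_one hmB, hcardB]
    rw [← add_sum_erase _ _ hmB]
    refine add_sum_lt_sum_compl_cyclicBlock hlen hhom (erase_subset _ _) hS (r := 2)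
      (by simp only [B] at hcardS; omega) fun E hE hcardE => ?_
    obtain ⟨i, j, hij, rfl⟩ := card_eq_two.mp hcardE
    rw [sum_pair hij]
    exact hextra i j (mem_range.mp (hE (mem_insert_self i {j})))
      (mem_range.mp (hE (mem_insert_of_mem (mem_singleton_self j)))) hij
  · have hS : ∀ x ∈ B, x < 2 * m := fun x hx => by
      have := hBlt x hx
      have : x ≠ 2 * m := fun h => hmB (h ▸ hx)
      omega
    rw [← zero_add (∑ x ∈ B, a x)]
    refine add_sum_lt_sum_compl_cyclicBlock hlen hhom subset_rfl hS (r := 1)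
      (by simp only [B] at hcardB; omega) fun E hE hcardE => ?_
    obtain ⟨e, rfl⟩ := card_eq_one.mp hcardE
    rw [sum_singleton]
    exact hpos e (mem_range.mp (hE (mem_singleton_self e)))

theorem stmt_19_general (n k : ℕ) (hk : Odd k)
    (a : ℕ → ℕ) (hpos : ∀ i, i < k → 0 < a i)
    (hsum : ∑ i ∈ Finset.range k, a i = 2 * n)
    (hhom : ∀ i, i < (k - 1) / 2 → a i = a (i + (k - 1) / 2))
    (hextra : ∀ i j, i < k → j < k → i ≠ j → a (k - 1) < a i + a j) :
    ∀ s len, 0 < len → len ≤ (k - 1) / 2 →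
      (∑ t ∈ Finset.range len, a ((s + t) % k)) < n := by
  obtain ⟨m, rfl⟩ := hk
  rw [show (2 * m + 1 - 1) / 2 = m by omega] at hhom ⊢
  rw [Nat.add_sub_cancel] at hextra
  intro s len _ hlen
  have hlt := sum_cyclicBlock_lt_sum_compl (s := s) hlen a hpos hhom hextra
  have htotal := sum_sdiff (f := a)
    (cyclicBlock_subset_range (k := 2 * m + 1) (s := s) (len := len) (by omega))
  rw [sum_cyclicBlock (k := 2 * m + 1) a (by omega)] at hlt htotal
  omega

theorem stmt_19 (n k : ℕ) (hn : 0 < n) (hk : Odd k) (hk3 : 3 ≤ k)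
    (a : ℕ → ℕ) (hpos : ∀ i, i < k → 0 < a i)
    (hsum : ∑ i ∈ Finset.range k, a i = 2 * n)
    (hhom : ∀ i, i < (k - 1) / 2 → a i = a (i + (k - 1) / 2))
    (hextra : ∀ i j, i < k → j < k → i ≠ j → a (k - 1) < a i + a j) :
    ∀ s len, 0 < len → len ≤ (k - 1) / 2 →
      (∑ t ∈ Finset.range len, a ((s + t) % k)) < n :=
  stmt_19_general n k hk a hpos hsum hhom hextra
end
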